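/- Let H = u^⊥ for a unit vector u, and let φ : ℝ → ℝ be a 1-Lipschitz function. For a convex body K in ℝⁿ, define K_t = (K − tu) ∩ (K† + tu), where K† is the reflection of K in H. Then for every x ∈ H, the intersection of ⋃_{t∈ℝ} (K_t + φ(t)u) with the line H^⊥ + x equals (K ∩ (H^⊥ + x)) + (φ(t_x) − t_x)u, where x + t_x u is the midpoint of the chord K ∩ (H^⊥ + x). -/
import Mathlib


open MeasureTheory Set RealInnerProductSpace

private lemma key_ineq (a b s t : ℝ) (φ : ℝ → ℝ) (hφ : LipschitzWith 1 φ)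
    (h1 : a ≤ s - φ t + t) (h2 : s - φ t + t ≤ b)
    (h3 : a ≤ φ t + t - s) (h4 : φ t + t - s ≤ b) :
    a ≤ s - φ ((a + b) / 2) + (a + b) / 2 ∧
      s - φ ((a + b) / 2) + (a + b) / 2 ≤ b := by
  set m := (a + b) / 2 with hm
  have hL : |φ t - φ m| ≤ |t - m| := by
    have := hφ.dist_le_mul t m
    simpa [Real.dist_eq] using this
  have hL1 : φ t - φ m ≤ |t - m| := le_trans (le_abs_self _) hL
  have hL2 : φ m - φ t ≤ |t - m| := by
    have : |φ m - φ t| ≤ |t - m| := by rwa [abs_sub_comm]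
    exact le_trans (le_abs_self _) this
  rcases le_total t m with h | h
  · have habs : |t - m| = m - t := by
      rw [abs_of_nonpos (by linarith)]; ring
    rw [habs] at hL1 hL2
    constructor <;> linarith
  · have habs : |t - m| = t - m := abs_of_nonneg (by linarith)
    rw [habs] at hL1 hL2
    constructor <;> linarith

theorem stmt_17 {n : ℕ} (u : EuclideanSpace ℝ (Fin n)) (hu : ‖u‖ = 1)
    (φ : ℝ → ℝ) (hφ : LipschitzWith 1 φ)
    (K : Set (EuclideanSpace ℝ (Fin n)))
    (hKconv : Convex ℝ K) (hKcomp : IsCompact K) (hKint : (interior K).Nonempty)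
    (x : EuclideanSpace ℝ (Fin n)) (hx : ⟪x, u⟫ = 0)
    (hne : {s : ℝ | x + s • u ∈ K}.Nonempty) :
    (⋃ t : ℝ,
        (fun y => y + φ t • u) ''
          (((fun y => y - t • u) '' K) ∩
            ((fun y => y + t • u) ''
              ((fun y => y - (2 * ⟪y, u⟫) • u) '' K)))) ∩
        {y | ∃ s : ℝ, y = x + s • u} =
      (fun y => y +
          (φ ((sInf {s : ℝ | x + s • u ∈ K} + sSup {s : ℝ | x + s • u ∈ K}) / 2) -
            (sInf {s : ℝ | x + s • u ∈ K} + sSup {s : ℝ | x + s • u ∈ K}) / 2) • u) ''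
        (K ∩ {y | ∃ s : ℝ, y = x + s • u}) := by
  have huu : ⟪u, u⟫ = (1 : ℝ) := by
    rw [real_inner_self_eq_norm_sq, hu]; norm_num
  have hinner : ∀ s : ℝ, ⟪x + s • u, u⟫ = s := by
    intro s
    rw [inner_add_left, real_inner_smul_left, hx, huu]; ring
  have hrefl : ∀ s : ℝ, (x + s • u) - (2 * ⟪x + s • u, u⟫) • u = x + (-s) • u := by
    intro s; rw [hinner]; module
  have hinv : ∀ z : EuclideanSpace ℝ (Fin n),
      (z - (2 * ⟪z, u⟫) • u) - (2 * ⟪z - (2 * ⟪z, u⟫) • u, u⟫) • u = z := by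
    intro z
    have h1 : ⟪z - (2 * ⟪z, u⟫) • u, u⟫ = -⟪z, u⟫ := by
      rw [inner_sub_left, real_inner_smul_left, huu]; ring
    rw [h1]; module
  have hreflK : ∀ z : EuclideanSpace ℝ (Fin n),
      z ∈ (fun y => y - (2 * ⟪y, u⟫) • u) '' K ↔ z - (2 * ⟪z, u⟫) • u ∈ K := by
    intro z
    constructor
    · rintro ⟨k, hk, rfl⟩
      simp only
      rw [hinv]; exact hk
    · intro h
      exact ⟨_, h, hinv z⟩
  set S := {s : ℝ | x + s • u ∈ K} with hSdef
  set a := sInf S with ha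
  set b := sSup S with hb
  have hSconv : Convex ℝ S := by
    intro s1 h1 s2 h2 p q hp hq hpq
    have hK := hKconv h1 h2 hp hq hpq
    have heq : p • (x + s1 • u) + q • (x + s2 • u) = x + (p • s1 + q • s2) • u := by
      have hp' : p = 1 - q := by linarith
      subst hp'
      simp only [smul_eq_mul]
      module
    rw [heq] at hK
    exact hK
  obtain ⟨R, hR⟩ := hKcomp.isBounded.subset_closedBall (0 : EuclideanSpace ℝ (Fin n))
  have hSbd : ∀ s ∈ S, |s| ≤ R := by
    intro s hs
    have h1 : ‖x + s • u‖ ≤ R := by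
      have := hR hs
      simpa [Metric.mem_closedBall, dist_eq_norm] using this
    have h2 : |s| ≤ ‖x + s • u‖ := by
      calc |s| = |⟪x + s • u, u⟫| := by rw [hinner]
        _ ≤ ‖x + s • u‖ * ‖u‖ := abs_real_inner_le_norm _ _
        _ = ‖x + s • u‖ := by rw [hu, mul_one]
    linarith
  have hbddA : BddAbove S := ⟨R, fun s hs => (le_abs_self s).trans (hSbd s hs)⟩
  have hbddB : BddBelow S := ⟨-R, fun s hs => by
    have h1 := hSbd s hs; have h2 := neg_abs_le s; linarith⟩
  have hScl : IsClosed S := by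
    have hpre : S = (fun s : ℝ => x + s • u) ⁻¹' K := rfl
    rw [hpre]
    exact hKcomp.isClosed.preimage (by fun_prop)
  have haS : a ∈ S := hScl.csInf_mem hne hbddB
  have hbS : b ∈ S := hScl.csSup_mem hne hbddA
  have hSeq : ∀ s : ℝ, (x + s • u ∈ K) ↔ a ≤ s ∧ s ≤ b := by
    intro s
    constructor
    · intro h
      exact ⟨csInf_le hbddB h, le_csSup hbddA h⟩
    · rintro ⟨h1, h2⟩
      exact hSconv.ordConnected.out haS hbS ⟨h1, h2⟩
  ext y
  constructor
  · rintro ⟨hy1, s, rfl⟩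
    rw [Set.mem_iUnion] at hy1
    obtain ⟨t, z, ⟨hz1, hz2⟩, hze⟩ := hy1
    obtain ⟨k1, hk1, hk1e⟩ := hz1
    obtain ⟨w, hw, hwe⟩ := hz2
    have hze' : z + φ t • u = x + s • u := hze
    have hk1e' : k1 - t • u = z := hk1e
    have hwe' : w + t • u = z := hwe
    have hzeq : z = x + (s - φ t) • u := by
      have h := eq_sub_of_add_eq hze'
      rw [h]; module
    have hk1eq : k1 = x + (s - φ t + t) • u := by
      have h := eq_add_of_sub_eq hk1e'
      rw [h, hzeq]; module
    have hweq : w = x + (s - φ t - t) • u := by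
      have h := eq_sub_of_add_eq hwe'
      rw [h, hzeq]; module
    rw [hk1eq] at hk1
    have m1 := (hSeq _).mp hk1
    rw [hreflK, hweq, hrefl] at hw
    have m2 := (hSeq _).mp hw
    obtain ⟨g1, g2⟩ := key_ineq a b s t φ hφ m1.1 m1.2 (by linarith [m2.1]) (by linarith [m2.2])
    refine ⟨x + (s - (φ ((a + b) / 2) - (a + b) / 2)) • u,
      ⟨(hSeq _).mpr ⟨by linarith, by linarith⟩, ⟨_, rfl⟩⟩, ?_⟩
    show x + (s - (φ ((a + b) / 2) - (a + b) / 2)) • u + (φ ((a + b) / 2) - (a + b) / 2) • u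
      = x + s • u
    module
  · rintro ⟨z, ⟨hzK, s', rfl⟩, hze⟩
    have hze' : x + s' • u + (φ ((a + b) / 2) - (a + b) / 2) • u = y := hze
    obtain ⟨hs1, hs2⟩ := (hSeq s').mp hzK
    constructor
    · rw [Set.mem_iUnion]
      refine ⟨(a + b) / 2, x + (s' - (a + b) / 2) • u, ⟨?_, ?_⟩, ?_⟩
      · exact ⟨x + s' • u, hzK, by show x + s' • u - ((a + b) / 2) • u = _; module⟩
      · refine ⟨x + (s' - 2 * ((a + b) / 2)) • u, ?_, ?_⟩
        · refine (hreflK _).mpr ?_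
          rw [hrefl]
          exact (hSeq _).mpr ⟨by linarith, by linarith⟩
        · show x + (s' - 2 * ((a + b) / 2)) • u + ((a + b) / 2) • u = x + (s' - (a + b) / 2) • u
          module
      · show x + (s' - (a + b) / 2) • u + φ ((a + b) / 2) • u = y
        rw [← hze']; module
    · exact ⟨s' + (φ ((a + b) / 2) - (a + b) / 2), by rw [← hze']; module⟩
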